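/- arXiv:math-ph/0512016 — 10 statements merged into one kernel-verified Lean document; each statement's English description precedes it below -/
import Mathlib

section
/- Let an engineerable directed graph with height assignment hgt be given, and suppose s_1 and s_2 are distinct vertices that are both targets (every incident edge points toward them), or both sources (every incident edge points away). If s_1 and s_2 are connected by a path, then dist(s_1, s_2) > |hgt(s_1) − hgt(s_2)|. -/
/-! Along any path the height changes by the number of forward steps minus the number of backward
steps. Since a height function rules out loops, a target has no outgoing edges and a source no
incoming ones. So a path between two distinct targets leaves the first by a backward step and
enters the second by a forward step (dually for sources); it contains steps of both directions,
hence its length strictly exceeds the absolute value of its net ascent, i.e. of the height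
difference of its endpoints. -/

/-- A finite directed (multi)graph is given by `src tgt : E → V`.
A step traverses an edge either forward (`true`) or backward (`false`). -/
def stepSrc {V E : Type*} (src tgt : E → V) (s : E × Bool) : V :=
  if s.2 then src s.1 else tgt s.1

def stepTgt {V E : Type*} (src tgt : E → V) (s : E × Bool) : V :=
  if s.2 then tgt s.1 else src s.1

/-- `IsPath src tgt a b p`: the list of steps `p` forms a path from `a` to `b`
(edges may be traversed in either direction). -/
def IsPath {V E : Type*} (src tgt : E → V) : V → V → List (E × Bool) → Prop
  | a, b, [] => a = b
  | a, b, s :: p => stepSrc src tgt s = a ∧ IsPath src tgt (stepTgt src tgt s) b p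

/-- Net ascent: number of edges traversed forward minus number traversed backward. -/
def netAscent {V E : Type*} (_src _tgt : E → V) (p : List (E × Bool)) : ℤ :=
  (p.countP (fun s => s.2) : ℤ) - (p.countP (fun s => !s.2) : ℤ)

/-- Engineerable: any two paths between the same pair of vertices have equal net ascent. -/
def Engineerable {V E : Type*} (src tgt : E → V) : Prop :=
  ∀ a b p q, IsPath src tgt a b p → IsPath src tgt a b q →
    netAscent src tgt p = netAscent src tgt q

/-- A height assignment: increases by exactly 1 along each directed edge. -/
def IsHeight {V E : Type*} (src tgt : E → V) (hgt : V → ℤ) : Prop :=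
  ∀ e, hgt (tgt e) = hgt (src e) + 1

/-- A target: every incident edge is directed toward it. -/
def IsTarget {V E : Type*} (src tgt : E → V) (v : V) : Prop :=
  ∀ e, src e = v → tgt e = v

/-- A source: every incident edge is directed away from it. -/
def IsSource {V E : Type*} (src tgt : E → V) (v : V) : Prop :=
  ∀ e, tgt e = v → src e = v

section

variable {V E : Type*} {src tgt : E → V} {hgt : V → ℤ}

namespace IsPath

theorem height_sub_eq_netAscent (hh : IsHeight src tgt hgt) :
    ∀ {a b : V} {p : List (E × Bool)}, IsPath src tgt a b p →
      hgt b - hgt a = netAscent src tgt p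
  | _, _, [], rfl => by simp [netAscent]
  | a, b, (e, d) :: p, ⟨hsrc, hp⟩ => by
    have ih := height_sub_eq_netAscent hh hp
    subst hsrc
    have he := hh e
    cases d <;> simp [stepSrc, stepTgt, netAscent] at ih ⊢ <;> omega

theorem exists_stepSrc_eq {a b : V} {p : List (E × Bool)} (hp : IsPath src tgt a b p)
    (hab : a ≠ b) : ∃ s ∈ p, stepSrc src tgt s = a := by
  cases p with
  | nil => exact absurd hp hab
  | cons s p => exact ⟨s, List.mem_cons_self, hp.1⟩

theorem exists_stepTgt_eq :
    ∀ {a b : V} {p : List (E × Bool)}, IsPath src tgt a b p → a ≠ b →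
      ∃ s ∈ p, stepTgt src tgt s = b
  | _, _, [], hp, hab => absurd hp hab
  | _, b, s :: p, ⟨_, hp⟩, _ => by
    by_cases hs : stepTgt src tgt s = b
    · exact ⟨s, List.mem_cons_self, hs⟩
    · obtain ⟨t, ht, htgt⟩ := exists_stepTgt_eq hp hs
      exact ⟨t, List.mem_cons_of_mem s ht, htgt⟩

end IsPath

theorem IsTarget.src_ne (hh : IsHeight src tgt hgt) {v : V} (hv : IsTarget src tgt v) (e : E) :
    src e ≠ v := fun he => by
  have := hh e
  rw [hv e he, he] at this
  omega

theorem IsSource.tgt_ne (hh : IsHeight src tgt hgt) {v : V} (hv : IsSource src tgt v) (e : E) :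
    tgt e ≠ v := fun he => by
  have := hh e
  rw [hv e he, he] at this
  omega

theorem IsTarget.snd_eq_false_of_stepSrc_eq (hh : IsHeight src tgt hgt) {v : V}
    (hv : IsTarget src tgt v) {s : E × Bool} (hs : stepSrc src tgt s = v) : s.2 = false := by
  obtain ⟨e, _ | _⟩ := s
  · rfl
  · exact absurd hs (hv.src_ne hh e)

theorem IsTarget.snd_eq_true_of_stepTgt_eq (hh : IsHeight src tgt hgt) {v : V}
    (hv : IsTarget src tgt v) {s : E × Bool} (hs : stepTgt src tgt s = v) : s.2 = true := by
  obtain ⟨e, _ | _⟩ := s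
  · exact absurd hs (hv.src_ne hh e)
  · rfl

theorem IsSource.snd_eq_true_of_stepSrc_eq (hh : IsHeight src tgt hgt) {v : V}
    (hv : IsSource src tgt v) {s : E × Bool} (hs : stepSrc src tgt s = v) : s.2 = true := by
  obtain ⟨e, _ | _⟩ := s
  · exact absurd hs (hv.tgt_ne hh e)
  · rfl

theorem IsSource.snd_eq_false_of_stepTgt_eq (hh : IsHeight src tgt hgt) {v : V}
    (hv : IsSource src tgt v) {s : E × Bool} (hs : stepTgt src tgt s = v) : s.2 = false := by
  obtain ⟨e, _ | _⟩ := s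
  · rfl
  · exact absurd hs (hv.tgt_ne hh e)

theorem abs_netAscent_lt_length {p : List (E × Bool)} (hfwd : ∃ s ∈ p, s.2 = true)
    (hbwd : ∃ s ∈ p, s.2 = false) : |netAscent src tgt p| < p.length := by
  obtain ⟨s, hs, hs₂⟩ := hfwd
  obtain ⟨t, ht, ht₂⟩ := hbwd
  have hpos : 0 < p.countP (fun s => s.2) := List.countP_pos_iff.mpr ⟨s, hs, hs₂⟩
  have hneg : 0 < p.countP (fun s => !s.2) := List.countP_pos_iff.mpr ⟨t, ht, by simp [ht₂]⟩
  have hlen := List.length_eq_countP_add_countP (fun s : E × Bool => s.2) (l := p)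
  simp only [Bool.decide_eq_true, decide_not] at hlen
  rw [netAscent, abs_lt]
  omega

end

theorem stmt5_general {V E : Type*} (src tgt : E → V)
    (hgt : V → ℤ) (hh : IsHeight src tgt hgt)
    (s₁ s₂ : V) (hne : s₁ ≠ s₂)
    (hts : (IsTarget src tgt s₁ ∧ IsTarget src tgt s₂) ∨
           (IsSource src tgt s₁ ∧ IsSource src tgt s₂)) :
    ∀ p : List (E × Bool), IsPath src tgt s₁ s₂ p →
      |hgt s₁ - hgt s₂| < (p.length : ℤ) := by
  intro p hp
  obtain ⟨s, hs, hsrc⟩ := hp.exists_stepSrc_eq hne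
  obtain ⟨t, ht, htgt⟩ := hp.exists_stepTgt_eq hne
  rw [abs_sub_comm, hp.height_sub_eq_netAscent hh]
  apply abs_netAscent_lt_length
  · rcases hts with ⟨-, h₂⟩ | ⟨h₁, -⟩
    exacts [⟨t, ht, h₂.snd_eq_true_of_stepTgt_eq hh htgt⟩,
      ⟨s, hs, h₁.snd_eq_true_of_stepSrc_eq hh hsrc⟩]
  · rcases hts with ⟨h₁, -⟩ | ⟨-, h₂⟩
    exacts [⟨s, hs, h₁.snd_eq_false_of_stepSrc_eq hh hsrc⟩,
      ⟨t, ht, h₂.snd_eq_false_of_stepTgt_eq hh htgt⟩]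

/-- Two distinct vertices that are both targets or both sources, connected by a
path, are at distance strictly greater than their absolute height difference: every path
joining them is strictly longer than |hgt s₁ − hgt s₂|. -/
theorem stmt5 {V E : Type*} [Fintype V] [Fintype E] (src tgt : E → V)
    (heng : Engineerable src tgt)
    (hgt : V → ℤ) (hh : IsHeight src tgt hgt)
    (s₁ s₂ : V) (hne : s₁ ≠ s₂)
    (hts : (IsTarget src tgt s₁ ∧ IsTarget src tgt s₂) ∨
           (IsSource src tgt s₁ ∧ IsSource src tgt s₂))
    (hconn : ∃ p, IsPath src tgt s₁ s₂ p) :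
    ∀ p : List (E × Bool), IsPath src tgt s₁ s₂ p →
      |hgt s₁ - hgt s₂| < (p.length : ℤ) :=
  stmt5_general src tgt hgt hh s₁ s₂ hne hts
end

section
/- (Hanging Gardens, existence) Let G = (V,E) be a finite bipartite (boson/fermion) connected graph, S ⊆ V a nonempty subset, and h : S → ℤ a function that is even on bosons in S, odd on fermions in S, and satisfies dist(s_1, s_2) > |h(s_1) − h(s_2)| for all distinct s_1, s_2 ∈ S. Define hgt(v) := max over s ∈ S of (h(s) − dist(v,s)). Then hgt is a height assignment for the orientation of G in which each edge {v,w} is directed from the vertex of smaller hgt to the vertex of larger hgt (these differ by exactly 1), and hgt extends h, i.e., hgt(s) = h(s) for all s ∈ S. -/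
/-!
Every term `h s - dist v s` changes by at most one along an edge, hence so does their maximum
`hgt`. Along an edge the parity of `dist v s` flips, and the parity condition on `h` makes the
parity of each term, hence of `hgt v`, that of the colour of `v`; so adjacent heights differ by
exactly one. On `S`, the condition `|h s₁ - h s₂| < dist s₁ s₂` says that the term of `s` itself
is the maximum at `s`.
-/

namespace SimpleGraph

variable {V : Type*} {G : SimpleGraph V}

theorem Coloring.even_dist_iff_congr (c : G.Coloring Bool) {u v : V} (huv : G.Reachable u v) :
    Even (G.dist u v) ↔ (c u ↔ c v) := by
  obtain ⟨p, hp⟩ := huv.exists_walk_length_eq_dist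
  rw [← hp, c.even_length_iff_congr p]

theorem Adj.dist_le_dist_add_one {v w : V} (hadj : G.Adj v w) (s : V) :
    G.dist w s ≤ G.dist v s + 1 := by
  have := hadj.symm.reachable.dist_triangle_left s
  rwa [dist_eq_one_iff_adj.mpr hadj.symm, add_comm] at this

noncomputable def hangingHeight (G : SimpleGraph V) (S : Finset V) (hS : S.Nonempty) (h : V → ℤ)
    (v : V) : ℤ :=
  S.sup' hS fun s => h s - G.dist v s

variable {S : Finset V} {hS : S.Nonempty} {h : V → ℤ}

theorem hangingHeight_eq_of_mem (hlip : ∀ s₁ ∈ S, ∀ s₂ ∈ S, h s₁ - h s₂ ≤ G.dist s₁ s₂)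
    {s : V} (hs : s ∈ S) : G.hangingHeight S hS h s = h s := by
  refine le_antisymm (Finset.sup'_le _ _ fun s' hs' => ?_) ?_
  · have := hlip s' hs' s hs
    rw [dist_comm] at this
    omega
  · exact Finset.le_sup'_of_le (fun s' => h s' - (G.dist s s' : ℤ)) hs (by simp)

theorem hangingHeight_le_of_adj {v w : V} (hadj : G.Adj v w) :
    G.hangingHeight S hS h v ≤ G.hangingHeight S hS h w + 1 := by
  refine Finset.sup'_le _ _ fun s hs => ?_
  have hle : h s - (G.dist w s : ℤ) ≤ G.hangingHeight S hS h w :=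
    Finset.le_sup' (fun s => h s - (G.dist w s : ℤ)) hs
  have hdist : (G.dist w s : ℤ) ≤ G.dist v s + 1 := mod_cast hadj.dist_le_dist_add_one s
  omega

theorem even_hangingHeight_iff (hconn : G.Connected) (c : G.Coloring Bool)
    (hpar : ∀ s ∈ S, Even (h s) ↔ c s) (v : V) :
    Even (G.hangingHeight S hS h v) ↔ c v := by
  obtain ⟨s, hs, hmax⟩ := Finset.exists_mem_eq_sup' hS fun s => h s - (G.dist v s : ℤ)
  have hdist := c.even_dist_iff_congr (hconn v s)
  rw [hangingHeight, hmax, Int.even_sub, Int.even_coe_nat, hpar s hs]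
  tauto

theorem hangingHeight_adj (hconn : G.Connected) (c : G.Coloring Bool)
    (hpar : ∀ s ∈ S, Even (h s) ↔ c s) {v w : V} (hadj : G.Adj v w) :
    G.hangingHeight S hS h v = G.hangingHeight S hS h w + 1 ∨
      G.hangingHeight S hS h w = G.hangingHeight S hS h v + 1 := by
  have hne : G.hangingHeight S hS h v ≠ G.hangingHeight S hS h w := fun heq => by
    refine c.valid hadj ?_
    rw [Bool.eq_iff_iff, ← even_hangingHeight_iff (hS := hS) hconn c hpar v,
      ← even_hangingHeight_iff (hS := hS) hconn c hpar w, heq]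
  have := hangingHeight_le_of_adj (hS := hS) (h := h) hadj
  have := hangingHeight_le_of_adj (hS := hS) (h := h) hadj.symm
  omega

end SimpleGraph

theorem stmt8_general {V : Type*}
    (G : SimpleGraph V) (hconn : G.Connected)
    (boson : V → Bool) (hbip : ∀ v w : V, G.Adj v w → boson v ≠ boson w)
    (S : Finset V) (hS : S.Nonempty) (h : V → ℤ)
    (hpar : ∀ s ∈ S, (boson s = true → Even (h s)) ∧ (boson s = false → Odd (h s)))
    (hdist : ∀ s₁ ∈ S, ∀ s₂ ∈ S, s₁ ≠ s₂ → |h s₁ - h s₂| < (G.dist s₁ s₂ : ℤ))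
    (hgt : V → ℤ)
    (hdef : ∀ v, hgt v = S.sup' hS (fun s => h s - (G.dist v s : ℤ))) :
    (∀ s ∈ S, hgt s = h s) ∧
    (∀ v w : V, G.Adj v w → hgt v = hgt w + 1 ∨ hgt w = hgt v + 1) := by
  obtain rfl : hgt = G.hangingHeight S hS h := funext hdef
  let c : G.Coloring Bool := SimpleGraph.Coloring.mk boson (hbip _ _)
  have hlip : ∀ s₁ ∈ S, ∀ s₂ ∈ S, h s₁ - h s₂ ≤ G.dist s₁ s₂ := fun s₁ hs₁ s₂ hs₂ => by
    rcases eq_or_ne s₁ s₂ with rfl | hne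
    · simp
    · exact (le_abs_self _).trans (hdist s₁ hs₁ s₂ hs₂ hne).le
  have hpar' : ∀ s ∈ S, Even (h s) ↔ boson s := fun s hs => by
    obtain ⟨heven, hodd⟩ := hpar s hs
    cases hb : boson s
    · simpa [← Int.not_even_iff_odd] using hodd hb
    · simpa using heven hb
  exact ⟨fun s hs => SimpleGraph.hangingHeight_eq_of_mem hlip hs,
    fun v w hadj => SimpleGraph.hangingHeight_adj hconn c hpar' hadj⟩

/-- Hanging Gardens, existence.  Given a finite connected bipartite graph,
a nonempty set `S` of prospective targets, and heights `h` on `S` of the right parity with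
`dist s₁ s₂ > |h s₁ − h s₂|`, the function `hgt v = max_{s∈S} (h s − dist v s)` extends `h`
and is a height assignment: the heights of adjacent vertices differ by exactly one (so each
edge may be directed from its lower to its higher endpoint). -/
theorem stmt8 {V : Type*} [Fintype V] [DecidableEq V]
    (G : SimpleGraph V) (hconn : G.Connected)
    (boson : V → Bool) (hbip : ∀ v w : V, G.Adj v w → boson v ≠ boson w)
    (S : Finset V) (hS : S.Nonempty) (h : V → ℤ)
    (hpar : ∀ s ∈ S, (boson s = true → Even (h s)) ∧ (boson s = false → Odd (h s)))
    (hdist : ∀ s₁ ∈ S, ∀ s₂ ∈ S, s₁ ≠ s₂ → |h s₁ - h s₂| < (G.dist s₁ s₂ : ℤ))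
    (hgt : V → ℤ)
    (hdef : ∀ v, hgt v = S.sup' hS (fun s => h s - (G.dist v s : ℤ))) :
    (∀ s ∈ S, hgt s = h s) ∧
    (∀ v w : V, G.Adj v w → hgt v = hgt w + 1 ∨ hgt w = hgt v + 1) :=
  stmt8_general G hconn boson hbip S hS h hpar hdist hgt hdef
end

section
/- (Hanging Gardens, target characterization) Under the hypotheses of the Hanging Gardens construction — G a finite connected bipartite graph, S ⊆ V nonempty, h : S → ℤ even on bosons, odd on fermions, with dist(s_1,s_2) > |h(s_1) − h(s_2)| for distinct s_1, s_2 ∈ S, and hgt(v) := max_{s∈S}(h(s) − dist(v,s)) — the set of targets of the induced orientation (vertices all of whose incident edges are directed toward them) is exactly S. -/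
/-!
At a vertex `v` the height is attained by some source `t ∈ S`. If `v ∉ S`, the first step `w`
of a geodesic from `v` to `t` is one closer to `t`, so `hgt w > hgt v` and `v` is no target.
If `v ∈ S`, the separation condition makes `hgt v = h v`, and the triangle inequality bounds
every neighbour's height by `h v`. Since `h` has the parity of the bipartition and adjacent
vertices lie in different classes, every term `h s - dist v s`, hence `hgt v`, has the parity of
`v`'s class, so the neighbour is strictly lower.
-/

namespace SimpleGraph

variable {V : Type*} {G : SimpleGraph V}

lemma Connected.even_dist_iff (hG : G.Connected) (c : G.Coloring Bool) (u v : V) :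
    Even (G.dist u v) ↔ (c u ↔ c v) := by
  obtain ⟨p, hp⟩ := hG.exists_walk_length_eq_dist u v
  rw [← hp, c.even_length_iff_congr p]

lemma Connected.exists_adj_dist_lt (hG : G.Connected) {v t : V} (hvt : v ≠ t) :
    ∃ w, G.Adj v w ∧ G.dist w t < G.dist v t := by
  obtain ⟨p, hp⟩ := hG.exists_walk_length_eq_dist v t
  cases p with
  | nil => exact absurd rfl hvt
  | cons hadj q =>
    refine ⟨_, hadj, ?_⟩
    rw [← hp, Walk.length_cons]
    exact Nat.lt_succ_of_le (dist_le q)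

/-- The height function `hgt` of the Hanging Gardens construction. -/
noncomputable def gardenHeight (G : SimpleGraph V) (S : Finset V) (hS : S.Nonempty) (h : V → ℤ)
    (v : V) : ℤ :=
  S.sup' hS fun s => h s - G.dist v s

variable {S : Finset V} {hS : S.Nonempty} {h : V → ℤ}

lemma le_gardenHeight (v : V) {s : V} (hs : s ∈ S) :
    h s - G.dist v s ≤ G.gardenHeight S hS h v :=
  Finset.le_sup' (fun s => h s - (G.dist v s : ℤ)) hs

lemma gardenHeight_le_iff {v : V} {a : ℤ} :
    G.gardenHeight S hS h v ≤ a ↔ ∀ s ∈ S, h s - G.dist v s ≤ a :=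
  Finset.sup'_le_iff hS _

lemma exists_gardenHeight_eq (v : V) :
    ∃ s ∈ S, G.gardenHeight S hS h v = h s - G.dist v s :=
  Finset.exists_mem_eq_sup' hS _

lemma Connected.exists_adj_gardenHeight_lt (hG : G.Connected) {v : V} (hv : v ∉ S) :
    ∃ w, G.Adj v w ∧ G.gardenHeight S hS h v < G.gardenHeight S hS h w := by
  obtain ⟨t, ht, hmax⟩ := exists_gardenHeight_eq (G := G) (hS := hS) (h := h) v
  obtain ⟨w, hadj, hdist⟩ := hG.exists_adj_dist_lt (v := v) (t := t) fun hvt => hv (hvt ▸ ht)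
  refine ⟨w, hadj, ?_⟩
  have := le_gardenHeight (G := G) (hS := hS) (h := h) w ht
  omega

lemma Connected.even_gardenHeight_iff (hG : G.Connected) (c : G.Coloring Bool)
    (hpar : ∀ s ∈ S, Even (h s) ↔ c s) (v : V) : Even (G.gardenHeight S hS h v) ↔ c v := by
  obtain ⟨t, ht, hvt⟩ := exists_gardenHeight_eq (G := G) (hS := hS) (h := h) v
  rw [hvt, Int.even_sub, hpar t ht, Int.even_coe_nat, hG.even_dist_iff c]
  cases c v <;> cases c t <;> decide

variable (hsep : ∀ s₁ ∈ S, ∀ s₂ ∈ S, s₁ ≠ s₂ → |h s₁ - h s₂| < (G.dist s₁ s₂ : ℤ))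
include hsep

lemma sub_dist_lt_of_mem {v t : V} (hv : v ∈ S) (ht : t ∈ S) (htv : t ≠ v) :
    h t - G.dist v t < h v := by
  have := (le_abs_self _).trans_lt (hsep t ht v hv htv)
  rw [dist_comm] at this
  omega

lemma gardenHeight_eq_of_mem {v : V} (hv : v ∈ S) : G.gardenHeight S hS h v = h v := by
  refine le_antisymm (gardenHeight_le_iff.2 fun t ht => ?_) ?_
  · rcases eq_or_ne t v with rfl | htv
    · simp
    · exact (sub_dist_lt_of_mem hsep hv ht htv).le
  · simpa using le_gardenHeight (G := G) (hS := hS) (h := h) v hv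

lemma Connected.gardenHeight_le_of_adj (hG : G.Connected) {v w : V} (hv : v ∈ S)
    (hadj : G.Adj v w) : G.gardenHeight S hS h w ≤ h v := by
  refine gardenHeight_le_iff.2 fun t ht => ?_
  rcases eq_or_ne t v with rfl | htv
  · omega
  · have htri : G.dist v t ≤ G.dist v w + G.dist w t := hG.dist_triangle
    rw [dist_eq_one_iff_adj.2 hadj] at htri
    have := sub_dist_lt_of_mem hsep hv ht htv
    omega

lemma Connected.forall_adj_gardenHeight_lt_iff (hG : G.Connected) (c : G.Coloring Bool)
    (hpar : ∀ s ∈ S, Even (h s) ↔ c s) (v : V) :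
    (∀ w, G.Adj v w → G.gardenHeight S hS h w < G.gardenHeight S hS h v) ↔ v ∈ S := by
  refine ⟨fun htarget => ?_, fun hv w hadj => ?_⟩
  · by_contra hv
    obtain ⟨w, hadj, hlt⟩ := hG.exists_adj_gardenHeight_lt (hS := hS) (h := h) hv
    exact (htarget w hadj).not_gt hlt
  · have hle := hG.gardenHeight_le_of_adj (hS := hS) hsep hv hadj
    rw [← gardenHeight_eq_of_mem hsep hv] at hle
    refine hle.lt_of_ne fun heq => c.valid hadj ?_
    have hparity := hG.even_gardenHeight_iff (hS := hS) c hpar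
    rw [Bool.eq_iff_iff, ← hparity v, ← hparity w, heq]

end SimpleGraph

theorem stmt9_general {V : Type*}
    (G : SimpleGraph V) (hconn : G.Connected)
    (boson : V → Bool) (hbip : ∀ v w : V, G.Adj v w → boson v ≠ boson w)
    (S : Finset V) (hS : S.Nonempty) (h : V → ℤ)
    (hpar : ∀ s ∈ S, (boson s = true → Even (h s)) ∧ (boson s = false → Odd (h s)))
    (hdist : ∀ s₁ ∈ S, ∀ s₂ ∈ S, s₁ ≠ s₂ → |h s₁ - h s₂| < (G.dist s₁ s₂ : ℤ))
    (hgt : V → ℤ)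
    (hdef : ∀ v, hgt v = S.sup' hS (fun s => h s - (G.dist v s : ℤ))) :
    ∀ v : V, (∀ w : V, G.Adj v w → hgt w < hgt v) ↔ v ∈ S := by
  let c : G.Coloring Bool := SimpleGraph.Coloring.mk boson fun hadj => hbip _ _ hadj
  have hpar' : ∀ s ∈ S, Even (h s) ↔ c s := fun s hs => by
    change Even (h s) ↔ boson s = true
    cases hb : boson s
    · simpa [Int.not_even_iff_odd] using (hpar s hs).2 hb
    · simpa using (hpar s hs).1 hb
  obtain rfl : hgt = G.gardenHeight S hS h := funext hdef
  exact hconn.forall_adj_gardenHeight_lt_iff hdist c hpar'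

/-- Hanging Gardens, target characterization.  With
`hgt v = max_{s∈S} (h s − dist v s)` as in the Hanging Gardens construction, and each edge
directed from its lower to its higher endpoint, the targets (vertices all of whose neighbors
are strictly lower) are exactly the elements of `S`. -/
theorem stmt9 {V : Type*} [Fintype V] [DecidableEq V]
    (G : SimpleGraph V) (hconn : G.Connected)
    (boson : V → Bool) (hbip : ∀ v w : V, G.Adj v w → boson v ≠ boson w)
    (S : Finset V) (hS : S.Nonempty) (h : V → ℤ)
    (hpar : ∀ s ∈ S, (boson s = true → Even (h s)) ∧ (boson s = false → Odd (h s)))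
    (hdist : ∀ s₁ ∈ S, ∀ s₂ ∈ S, s₁ ≠ s₂ → |h s₁ - h s₂| < (G.dist s₁ s₂ : ℤ))
    (hgt : V → ℤ)
    (hdef : ∀ v, hgt v = S.sup' hS (fun s => h s - (G.dist v s : ℤ))) :
    ∀ v : V, (∀ w : V, G.Adj v w → hgt w < hgt v) ↔ v ∈ S :=
  stmt9_general G hconn boson hbip S hS h hpar hdist hgt hdef
end

section
/- (Hanging Gardens, uniqueness) Two engineerable orientations of the same finite connected bipartite graph that have the same set S of targets and whose height assignments agree on S (with the height assignments normalized as in the construction hgt(v) = max_{s∈S}(hgt(s) − dist(v,s))) are identical as directed graphs, and their height assignments agree on all vertices. -/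
/-- Auxiliary: one-sided inequality via a maximal-counterexample climbing argument. -/
lemma stmt10_aux {V : Type*} [Fintype V]
    (G : SimpleGraph V) (S : Finset V)
    (h₁ h₂ : V → ℤ)
    (hadj₁ : ∀ v w : V, G.Adj v w → h₁ v = h₁ w + 1 ∨ h₁ w = h₁ v + 1)
    (hadj₂ : ∀ v w : V, G.Adj v w → h₂ v = h₂ w + 1 ∨ h₂ w = h₂ v + 1)
    (htar₁ : ∀ v : V, (∀ w : V, G.Adj v w → h₁ w < h₁ v) ↔ v ∈ S)
    (hagree : ∀ s ∈ S, h₁ s = h₂ s) :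
    ∀ v : V, h₁ v ≤ h₂ v := by
  by_contra hcon
  push_neg at hcon
  obtain ⟨v₀, hv₀⟩ := hcon
  set A : Finset V := Finset.univ.filter (fun v => h₂ v < h₁ v) with hA
  have hAne : A.Nonempty := ⟨v₀, by simp [hA, hv₀]⟩
  obtain ⟨v, hvA, hvmax⟩ := A.exists_max_image h₁ hAne
  have hvlt : h₂ v < h₁ v := by simpa [hA] using hvA
  have hvS : v ∉ S := fun hS => absurd (hagree v hS) (by omega)
  have : ¬ (∀ w : V, G.Adj v w → h₁ w < h₁ v) := fun h => hvS ((htar₁ v).mp h)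
  push_neg at this
  obtain ⟨w, hadj, hge⟩ := this
  have hw1 : h₁ w = h₁ v + 1 := by rcases hadj₁ v w hadj with h | h <;> omega
  have hw2 : h₂ w ≤ h₂ v + 1 := by rcases hadj₂ v w hadj with h | h <;> omega
  have hwA : w ∈ A := by simp only [hA, Finset.mem_filter, Finset.mem_univ, true_and]; omega
  have := hvmax w hwA
  omega

/-- Hanging Gardens, uniqueness.  Two engineerable orientations of the same
finite connected bipartite graph (each encoded by a height assignment, with every edge
directed from lower to higher endpoint) that have the same set `S` of targets and whose
height assignments agree on `S` are identical: their height assignments agree everywhere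
(hence the directed graphs coincide). -/
theorem stmt10 {V : Type*} [Fintype V]
    (G : SimpleGraph V) (hconn : G.Connected)
    (boson : V → Bool) (hbip : ∀ v w : V, G.Adj v w → boson v ≠ boson w)
    (S : Finset V)
    (hgt₁ hgt₂ : V → ℤ)
    (hadj₁ : ∀ v w : V, G.Adj v w → hgt₁ v = hgt₁ w + 1 ∨ hgt₁ w = hgt₁ v + 1)
    (hadj₂ : ∀ v w : V, G.Adj v w → hgt₂ v = hgt₂ w + 1 ∨ hgt₂ w = hgt₂ v + 1)
    (htar₁ : ∀ v : V, (∀ w : V, G.Adj v w → hgt₁ w < hgt₁ v) ↔ v ∈ S)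
    (htar₂ : ∀ v : V, (∀ w : V, G.Adj v w → hgt₂ w < hgt₂ v) ↔ v ∈ S)
    (hagree : ∀ s ∈ S, hgt₁ s = hgt₂ s) :
    ∀ v : V, hgt₁ v = hgt₂ v := by
  intro v
  exact le_antisymm
    (stmt10_aux G S hgt₁ hgt₂ hadj₁ hadj₂ htar₁ hagree v)
    (stmt10_aux G S hgt₂ hgt₁ hadj₂ hadj₁ htar₂ (fun s hs => (hagree s hs).symm) v)
end

section
/- In a finite engineerable directed graph with height assignment hgt and target set S, the height function is recovered from its values on targets: for every vertex v in the same connected component as S, hgt(v) = max over s ∈ S of (hgt(s) − dist(s,v)). -/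
/-- In a finite connected engineerable directed graph (encoded by a height
assignment, edges directed from lower to higher endpoint) with target set `S`, the height
function is recovered from its values on targets:
`hgt v = max_{s ∈ S} (hgt s − dist s v)` (in particular `S` is nonempty). -/
theorem stmt11 {V : Type*} [Fintype V] [Nonempty V]
    (G : SimpleGraph V) (hconn : G.Connected)
    (hgt : V → ℤ)
    (hadj : ∀ v w : V, G.Adj v w → hgt v = hgt w + 1 ∨ hgt w = hgt v + 1)
    (S : Finset V)
    (hSdef : ∀ v : V, v ∈ S ↔ (∀ w : V, G.Adj v w → hgt w < hgt v)) :
    ∃ hS : S.Nonempty, ∀ v : V, hgt v = S.sup' hS (fun s => hgt s - (G.dist s v : ℤ)) := by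
  have key : ∀ (u v : V) (p : G.Walk u v), hgt u - hgt v ≤ (p.length : ℤ) := by
    intro u v p
    induction p with
    | nil => simp
    | @cons a b c hab p ih =>
      have : hgt a ≤ hgt b + 1 := by
        rcases hadj _ _ hab with h1 | h1 <;> omega
      rw [SimpleGraph.Walk.length_cons]
      push_cast
      omega
  have hdist : ∀ u v : V, hgt u - hgt v ≤ (G.dist u v : ℤ) := by
    intro u v
    obtain ⟨p, hp⟩ := hconn.exists_walk_length_eq_dist u v
    have := key u v p
    omega
  -- maximum vertex
  obtain ⟨m, -, hm⟩ := Finset.exists_max_image Finset.univ hgt ⟨Classical.arbitrary V, Finset.mem_univ _⟩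
  have hm' : ∀ v : V, hgt v ≤ hgt m := fun v => hm v (Finset.mem_univ v)
  have hmS : m ∈ S := by
    rw [hSdef]
    intro w hw
    rcases hadj _ _ hw with h1 | h1
    · omega
    · have := hm' w; omega
  have reach : ∀ n : ℕ, ∀ v : V, (hgt m - hgt v).toNat ≤ n →
      ∃ s ∈ S, hgt v + (G.dist s v : ℤ) ≤ hgt s := by
    intro n
    induction n with
    | zero =>
      intro v hv
      have hvm : hgt v = hgt m := by have := hm' v; omega
      refine ⟨v, ?_, by simp⟩
      rw [hSdef]
      intro w hw
      rcases hadj _ _ hw with h1 | h1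
      · omega
      · have := hm' w; omega
    | succ n ih =>
      intro v hv
      by_cases hvS : v ∈ S
      · exact ⟨v, hvS, by simp⟩
      · rw [hSdef] at hvS
        push_neg at hvS
        obtain ⟨w, hw, hwle⟩ := hvS
        have hw1 : hgt w = hgt v + 1 := by
          rcases hadj _ _ hw with h1 | h1 <;> omega
        obtain ⟨s, hs, hsle⟩ := ih w (by have := hm' w; omega)
        refine ⟨s, hs, ?_⟩
        have htri : G.dist s v ≤ G.dist s w + G.dist w v := hconn.dist_triangle
        have h1 : G.dist w v ≤ 1 := by
          have := SimpleGraph.dist_le hw.symm.toWalk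
          simpa using this
        have : (G.dist s v : ℤ) ≤ (G.dist s w : ℤ) + 1 := by exact_mod_cast htri.trans (by omega)
        omega
  have hS : S.Nonempty := ⟨m, hmS⟩
  refine ⟨hS, fun v => le_antisymm ?_ ?_⟩
  · obtain ⟨s, hs, hsle⟩ := reach (hgt m - hgt v).toNat v le_rfl
    exact le_trans (by omega) (Finset.le_sup' (fun s => hgt s - (G.dist s v : ℤ)) hs)
  · exact Finset.sup'_le _ _ fun s hs => by have := hdist s v; omega
end

section
/- (Vertex raising preserves engineerability) Let (V,E,I) be an engineerable directed graph with height assignment hgt, and let v be a source. Reversing the orientation of all edges incident to v yields an engineerable directed graph with height assignment hgt' given by hgt'(v) = hgt(v) + 2 and hgt'(w) = hgt(w) for w ≠ v; moreover v is a target in the new graph. -/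
/-- Vertex raising at a source preserves engineerability: reversing all edges
incident to a source $v$ yields a directed graph with height assignment raised by 2 at $v$
and unchanged elsewhere, and $v$ becomes a target. -/
theorem stmt13 {V E : Type*} [Fintype V] [Fintype E] [DecidableEq V] (src tgt : E → V)
    (hgt : V → ℤ) (hh : IsHeight src tgt hgt)
    (v : V) (hv : IsSource src tgt v) :
    IsHeight
      (fun e => if src e = v ∨ tgt e = v then tgt e else src e)
      (fun e => if src e = v ∨ tgt e = v then src e else tgt e)
      (fun w => if w = v then hgt v + 2 else hgt w) ∧
    IsTarget
      (fun e => if src e = v ∨ tgt e = v then tgt e else src e)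
      (fun e => if src e = v ∨ tgt e = v then src e else tgt e) v := by
  constructor
  · intro e
    have he := hh e
    by_cases hc : src e = v ∨ tgt e = v
    · simp only [hc, if_true]
      have hs : src e = v := by
        rcases hc with h | h
        · exact h
        · exact hv e h
      have ht : tgt e ≠ v := by
        intro h
        rw [hs, h] at he; omega
      simp [hs, ht] at he ⊢
      omega
    · push_neg at hc
      simp [hc.1, hc.2, if_neg] at he ⊢
      exact he
  · intro e h
    by_cases hc : src e = v ∨ tgt e = v
    · simp only [hc, if_true] at h ⊢
      exact hv e h
    · simp only [hc, if_false] at h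
      exact absurd (Or.inl h) hc
end

section
/- (One-hooking) Let (V,E,I) be a finite connected engineerable directed bipartite graph and v ∈ V any vertex. Then there is a finite sequence of vertex-lowering operations (each performed at a current target different from v) that transforms (V,E,I) into the unique engineerable orientation of the same underlying graph whose only target is v. -/
/-- An orientation of the underlying graph: `f e = true` keeps the reference direction of
edge `e`, `f e = false` reverses it. -/
def osrc {V E : Type*} (src tgt : E → V) (f : E → Bool) (e : E) : V :=
  if f e then src e else tgt e

def otgt {V E : Type*} (src tgt : E → V) (f : E → Bool) (e : E) : V :=
  if f e then tgt e else src e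

/-- Vertex lowering at the vertex `v`: `v` is a target of the orientation `f`, and `g` is
obtained from `f` by reversing exactly the edges incident to `v`. -/
def Lower {V E : Type*} [DecidableEq V] (src tgt : E → V) (f g : E → Bool) (v : V) : Prop :=
  IsTarget (osrc src tgt f) (otgt src tgt f) v ∧
  ∀ e, g e = if osrc src tgt f e = v ∨ otgt src tgt f e = v then !f e else f e

section Aux

variable {V E : Type*} (src tgt : E → V)

lemma aux_isPath_cons {s : E × Bool} {p : List (E × Bool)} {a b : V} :
    IsPath src tgt a b (s :: p) ↔
      stepSrc src tgt s = a ∧ IsPath src tgt (stepTgt src tgt s) b p := Iff.rfl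

lemma aux_isPath_nil {a b : V} : IsPath src tgt a b ([] : List (E × Bool)) ↔ a = b := Iff.rfl

/-- Heights change by exactly one along a step. -/
lemma aux_hgt_step {f : E → Bool} {hgt : V → ℤ}
    (hhgt : IsHeight (osrc src tgt f) (otgt src tgt f) hgt) (s : E × Bool) :
    hgt (stepTgt src tgt s) = hgt (stepSrc src tgt s) + 1 ∨
      hgt (stepSrc src tgt s) = hgt (stepTgt src tgt s) + 1 := by
  have h := hhgt s.1
  unfold osrc otgt at h
  unfold stepSrc stepTgt
  rcases s with ⟨e, b⟩
  cases b <;> cases hf : f e <;> simp [hf] at h ⊢ <;> omega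

/-- The orientation endpoints of an edge agree with the step endpoints, up to swap. -/
lemma aux_endpoints (f : E → Bool) (s : E × Bool) :
    (osrc src tgt f s.1 = stepSrc src tgt s ∧ otgt src tgt f s.1 = stepTgt src tgt s) ∨
    (osrc src tgt f s.1 = stepTgt src tgt s ∧ otgt src tgt f s.1 = stepSrc src tgt s) := by
  rcases s with ⟨e, b⟩
  cases b <;> cases hf : f e <;> simp [hf, osrc, otgt, stepSrc, stepTgt]

lemma aux_hgt_bound {f : E → Bool} {hgt : V → ℤ}
    (hhgt : IsHeight (osrc src tgt f) (otgt src tgt f) hgt) :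
    ∀ (p : List (E × Bool)) (a b : V), IsPath src tgt a b p →
      hgt b ≤ hgt a + p.length := by
  intro p
  induction p with
  | nil => intro a b h; rw [(aux_isPath_nil src tgt).mp h]; simp
  | cons s p ih =>
    intro a b h
    obtain ⟨hs, hp⟩ := h
    have h1 := ih _ _ hp
    have h2 := aux_hgt_step src tgt hhgt s
    rw [hs] at h2
    simp only [List.length_cons]
    push_cast
    omega

/-- Graph distance to `v`. -/
noncomputable def auxDist (v : V) (_hconn : ∀ a b : V, ∃ p, IsPath src tgt a b p) (w : V) : ℕ :=
  sInf {n | ∃ p : List (E × Bool), IsPath src tgt w v p ∧ p.length = n}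

lemma auxDist_spec (v : V) (hconn : ∀ a b : V, ∃ p, IsPath src tgt a b p) (w : V) :
    ∃ p : List (E × Bool), IsPath src tgt w v p ∧ p.length = auxDist src tgt v hconn w := by
  have hne : {n | ∃ p : List (E × Bool), IsPath src tgt w v p ∧ p.length = n}.Nonempty := by
    obtain ⟨p, hp⟩ := hconn w v; exact ⟨p.length, p, hp, rfl⟩
  exact Nat.sInf_mem hne

lemma auxDist_le (v : V) (hconn : ∀ a b : V, ∃ p, IsPath src tgt a b p) (w : V)
    (p : List (E × Bool)) (hp : IsPath src tgt w v p) :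
    auxDist src tgt v hconn w ≤ p.length :=
  Nat.sInf_le ⟨p, hp, rfl⟩

lemma auxDist_self (v : V) (hconn : ∀ a b : V, ∃ p, IsPath src tgt a b p) :
    auxDist src tgt v hconn v = 0 :=
  Nat.le_zero.mp (auxDist_le src tgt v hconn v [] rfl)

/-- Triangle inequality: one step. -/
lemma auxDist_step (v : V) (hconn : ∀ a b : V, ∃ p, IsPath src tgt a b p)
    (s : E × Bool) :
    auxDist src tgt v hconn (stepSrc src tgt s) ≤
      auxDist src tgt v hconn (stepTgt src tgt s) + 1 := by
  obtain ⟨p, hp, hlen⟩ := auxDist_spec src tgt v hconn (stepTgt src tgt s)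
  have : IsPath src tgt (stepSrc src tgt s) v (s :: p) := ⟨rfl, hp⟩
  have h := auxDist_le src tgt v hconn _ _ this
  simpa [hlen] using h

/-- Given an edge with oriented endpoints x → y, there is a step from x to y. -/
lemma aux_step_of_edge (f : E → Bool) (e : E) :
    ∃ s : E × Bool, s.1 = e ∧ stepSrc src tgt s = osrc src tgt f e ∧
      stepTgt src tgt s = otgt src tgt f e := by
  cases hf : f e
  · exact ⟨(e, false), rfl, by simp [stepSrc, osrc, hf], by simp [stepTgt, otgt, hf]⟩
  · exact ⟨(e, true), rfl, by simp [stepSrc, osrc, hf], by simp [stepTgt, otgt, hf]⟩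

lemma aux_hgt_nonneg {f : E → Bool} {hgt : V → ℤ} (v : V)
    (hconn : ∀ a b : V, ∃ p, IsPath src tgt a b p)
    (hhgt : IsHeight (osrc src tgt f) (otgt src tgt f) hgt) (h0 : hgt v = 0) (w : V) :
    0 ≤ hgt w + auxDist src tgt v hconn w := by
  obtain ⟨p, hp, hlen⟩ := auxDist_spec src tgt v hconn w
  have := aux_hgt_bound src tgt hhgt p w v hp
  rw [hlen] at this
  omega

end Aux

section Main

variable {V E : Type*} [Fintype V] [Fintype E] [DecidableEq V]

lemma aux_main (src tgt : E → V) (hconn : ∀ a b : V, ∃ p, IsPath src tgt a b p)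
    (hne : ∀ e, src e ≠ tgt e) (v : V) :
    ∀ (n : ℕ) (f : E → Bool) (hgt : V → ℤ),
      IsHeight (osrc src tgt f) (otgt src tgt f) hgt → hgt v = 0 →
      (∑ w : V, (hgt w + auxDist src tgt v hconn w)).toNat = n →
      ∃ g : E → Bool,
        Relation.ReflTransGen (fun f₁ f₂ => ∃ w, w ≠ v ∧ Lower src tgt f₁ f₂ w) f g ∧
        (∀ w, IsTarget (osrc src tgt g) (otgt src tgt g) w ↔ w = v) := by
  intro n
  induction n using Nat.strong_induction_on with
  | _ n ih =>
  intro f hgt hhgt h0 hn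
  set d : V → ℕ := auxDist src tgt v hconn with hd
  -- no self-loops in the orientation
  have hosne : ∀ e, osrc src tgt f e ≠ otgt src tgt f e := by
    intro e
    cases hf : f e <;> simp [osrc, otgt, hf, hne e, (hne e).symm]
  have hnonneg : ∀ w, 0 ≤ hgt w + d w :=
    fun w => aux_hgt_nonneg src tgt v hconn hhgt h0 w
  by_cases hall : ∀ w, hgt w = -(d w : ℤ)
  · -- we are at the one-hooked orientation already
    refine ⟨f, Relation.ReflTransGen.refl, ?_⟩
    intro w
    constructor
    · intro htar
      by_contra hwv
      -- take a shortest path from w to v; its first step exits w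
      obtain ⟨p, hp, hlen⟩ := auxDist_spec src tgt v hconn w
      rw [← hd] at hlen
      rcases p with _ | ⟨s, p'⟩
      · exact hwv ((aux_isPath_nil src tgt).mp hp)
      · obtain ⟨hs, hp'⟩ := hp
        set u := stepTgt src tgt s with hu
        have hdu : d u ≤ d w - 1 := by
          have h := auxDist_le src tgt v hconn u p' hp'
          rw [← hd] at h
          simp only [List.length_cons] at hlen
          omega
        have hdw : 1 ≤ d w := by
          simp only [List.length_cons] at hlen
          omega
        have hgw : hgt w = -(d w : ℤ) := hall w
        have hgu : hgt u = -(d u : ℤ) := hall u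
        have hstep := aux_hgt_step src tgt hhgt s
        rw [hs, ← hu] at hstep
        have huw : hgt u = hgt w + 1 := by omega
        have hne_uw : u ≠ w := by intro h; rw [h] at huw; omega
        rcases aux_endpoints src tgt f s with ⟨ho1, ho2⟩ | ⟨ho1, ho2⟩
        · -- osrc = w, otgt = u : w has an outgoing edge, contradicting target
          rw [hs] at ho1
          have := htar s.1 ho1
          rw [ho2, ← hu] at this
          exact hne_uw this
        · -- osrc = u, otgt = w : heights contradict
          have := hhgt s.1
          rw [ho1, ho2, ← hu, hs] at this
          omega
    · rintro rfl
      intro e he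
      exfalso
      have := hhgt e
      rw [he, h0] at this
      have h1 := hall (otgt src tgt f e)
      have h2 : (0 : ℤ) ≤ d (otgt src tgt f e) := Int.ofNat_nonneg _
      omega
  · -- there is a target ≠ v to lower
    push_neg at hall
    obtain ⟨w₀, hw₀⟩ := hall
    have hw₀pos : 0 < hgt w₀ + d w₀ := by
      have := hnonneg w₀
      rcases lt_or_eq_of_le this with h | h
      · exact h
      · exfalso; exact hw₀ (by omega)
    -- choose lexicographically maximal vertex
    obtain ⟨w, -, hwmax⟩ := Finset.exists_max_image Finset.univ
      (fun u => toLex ((hgt u + d u : ℤ), hgt u)) ⟨v, Finset.mem_univ v⟩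
    have hwmax' : ∀ u, hgt u + d u < hgt w + d w ∨
        (hgt u + d u = hgt w + d w ∧ hgt u ≤ hgt w) := by
      intro u
      have := hwmax u (Finset.mem_univ u)
      rw [Prod.Lex.le_iff] at this
      exact this
    have hwfst : ∀ u, hgt u + d u ≤ hgt w + d w := by
      intro u; rcases hwmax' u with h | ⟨h, -⟩ <;> omega
    have hwpos : 0 < hgt w + d w := lt_of_lt_of_le hw₀pos (hwfst w₀)
    have hwv : w ≠ v := by
      intro h
      have hdv : d v = 0 := by rw [hd]; exact auxDist_self src tgt v hconn
      rw [h, h0, hdv] at hwpos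
      simp at hwpos
    -- w is a target
    have htar : IsTarget (osrc src tgt f) (otgt src tgt f) w := by
      intro e he
      exfalso
      set u := otgt src tgt f e with hu
      have hgu : hgt u = hgt w + 1 := by
        have := hhgt e; rw [he] at this; exact this
      obtain ⟨s, hs1, hs2, hs3⟩ := aux_step_of_edge src tgt f e
      have hstep := auxDist_step src tgt v hconn s
      rw [← hd] at hstep
      rw [hs2, hs3, he, ← hu] at hstep
      -- d w ≤ d u + 1
      rcases hwmax' u with h | ⟨-, h⟩ <;> omega
    -- in fact no edge is directed out of w
    have hnoout : ∀ e, osrc src tgt f e ≠ w := by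
      intro e he
      exact hosne e (he.trans (htar e he).symm)
    -- define the lowered orientation
    set g : E → Bool := fun e =>
      if osrc src tgt f e = w ∨ otgt src tgt f e = w then !f e else f e with hg
    have hlower : Lower src tgt f g w := ⟨htar, fun e => rfl⟩
    -- oriented endpoints of g
    have hgsrc : ∀ e, otgt src tgt f e = w →
        osrc src tgt g e = otgt src tgt f e ∧ otgt src tgt g e = osrc src tgt f e := by
      intro e he
      have hge : g e = !f e := by rw [hg]; simp [he]
      cases hf : f e <;> simp [osrc, otgt, hge, hf]
    have hgsame : ∀ e, otgt src tgt f e ≠ w →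
        osrc src tgt g e = osrc src tgt f e ∧ otgt src tgt g e = otgt src tgt f e := by
      intro e he
      have hge : g e = f e := by rw [hg]; simp [he, hnoout e]
      cases hf : f e <;> simp [osrc, otgt, hge, hf]
    -- the new height
    set hgt' : V → ℤ := fun x => if x = w then hgt w - 2 else hgt x with hgt'def
    have hval_w : hgt' w = hgt w - 2 := by simp [hgt'def]
    have hval : ∀ x, x ≠ w → hgt' x = hgt x := by
      intro x hx; simp [hgt'def, hx]
    have hhgt' : IsHeight (osrc src tgt g) (otgt src tgt g) hgt' := by
      intro e
      by_cases he : otgt src tgt f e = w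
      · obtain ⟨h1, h2⟩ := hgsrc e he
        rw [h1, h2, he]
        have hos : osrc src tgt f e ≠ w := hnoout e
        have := hhgt e
        rw [he] at this
        rw [hval_w, hval _ hos]
        omega
      · obtain ⟨h1, h2⟩ := hgsame e he
        rw [h1, h2]
        have hos : osrc src tgt f e ≠ w := hnoout e
        rw [hval _ he, hval _ hos]
        exact hhgt e
    have h0' : hgt' v = 0 := by
      rw [hval v (Ne.symm hwv)]
      exact h0
    -- the sum decreases by 2
    have hsum : (∑ x : V, (hgt' x + d x)) = (∑ x : V, (hgt x + d x)) - 2 := by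
      have key : ∀ x : V, hgt' x + d x = (hgt x + d x) + (if x = w then (-2 : ℤ) else 0) := by
        intro x
        by_cases hx : x = w
        · subst hx; rw [hval_w, if_pos rfl]; ring
        · rw [hval _ hx, if_neg hx]; ring
      rw [Finset.sum_congr rfl (fun x _ => key x), Finset.sum_add_distrib,
        Finset.sum_ite_eq' Finset.univ w (fun _ => (-2 : ℤ))]
      simp only [Finset.mem_univ, if_pos]
      ring
    have hnonneg' : ∀ x, 0 ≤ hgt' x + d x :=
      fun x => aux_hgt_nonneg src tgt v hconn hhgt' h0' x
    have hsumnn : 0 ≤ ∑ x : V, (hgt' x + d x) :=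
      Finset.sum_nonneg (fun x _ => hnonneg' x)
    have hlt : (∑ x : V, (hgt' x + d x)).toNat < n := by
      rw [← hn]
      omega
    obtain ⟨g', hg'1, hg'2⟩ := ih _ hlt g hgt' hhgt' h0' rfl
    exact ⟨g', Relation.ReflTransGen.head ⟨w, hwv, hlower⟩ hg'1, hg'2⟩

end Main

/-- One-hooking.  A finite connected engineerable directed bipartite graph can
be transformed, by a finite sequence of vertex lowerings at targets different from $v$, into
the orientation of the same underlying graph whose only target is $v$. -/
theorem stmt14 {V E : Type*} [Fintype V] [Fintype E] [DecidableEq V] (src tgt : E → V)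
    (hconn : ∀ a b : V, ∃ p, IsPath src tgt a b p)
    (boson : V → Prop) (hbip : ∀ e, boson (src e) ↔ ¬ boson (tgt e))
    (f : E → Bool)
    (heng : ∃ hgt : V → ℤ, IsHeight (osrc src tgt f) (otgt src tgt f) hgt)
    (v : V) :
    ∃ g : E → Bool,
      Relation.ReflTransGen (fun f₁ f₂ => ∃ w, w ≠ v ∧ Lower src tgt f₁ f₂ w) f g ∧
      (∀ w, IsTarget (osrc src tgt g) (otgt src tgt g) w ↔ w = v) := by
  obtain ⟨hgt₀, hhgt₀⟩ := heng
  have hne : ∀ e, src e ≠ tgt e := by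
    intro e h
    have := hbip e
    rw [h] at this
    tauto
  set hgt : V → ℤ := fun x => hgt₀ x - hgt₀ v with hgtdef
  have hhgt : IsHeight (osrc src tgt f) (otgt src tgt f) hgt := by
    intro e
    simp only [hgtdef]
    have := hhgt₀ e
    omega
  have h0 : hgt v = 0 := by simp [hgtdef]
  exact aux_main src tgt hconn hne v _ f hgt hhgt h0 rfl
end

section
/- (Base Adinkra reachability) Every finite engineerable directed bipartite graph can be transformed by a finite sequence of vertex lowerings into the base orientation of the same underlying graph, namely the orientation in which every edge is directed from its boson endpoint to its fermion endpoint (equivalently, all bosons at height 0 and all fermions at height 1). -/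
/- ### Auxiliary development -/

/-- Reachability in the underlying undirected graph. -/
def Reach {V E : Type*} (src tgt : E → V) (a b : V) : Prop :=
  ∃ p, IsPath src tgt a b p

namespace StmtAux

variable {V E : Type*} (src tgt : E → V)

lemma isPath_append {a b c : V} {p q : List (E × Bool)}
    (h : IsPath src tgt a b p) (h' : IsPath src tgt b c q) :
    IsPath src tgt a c (p ++ q) := by
  induction p generalizing a with
  | nil =>
      have hab : a = b := h
      subst hab; exact h'
  | cons s p ih => exact ⟨h.1, ih h.2⟩

lemma isPath_reverse {a b : V} {p : List (E × Bool)} (h : IsPath src tgt a b p) :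
    IsPath src tgt b a (p.reverse.map (fun s => (s.1, !s.2))) := by
  induction p generalizing a with
  | nil =>
      have hab : a = b := h
      subst hab; exact rfl
  | cons s p ih =>
      obtain ⟨h1, h2⟩ := h
      have hrev := ih h2
      rw [List.reverse_cons, List.map_append]
      refine isPath_append src tgt hrev ?_
      refine ⟨?_, ?_⟩
      · cases hs : s.2 <;> simp [stepSrc, stepTgt, hs]
      · show stepTgt src tgt (s.1, !s.2) = a
        cases hs : s.2 <;> simpa [stepSrc, stepTgt, hs] using h1

lemma reach_refl (a : V) : Reach src tgt a a := ⟨[], rfl⟩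

lemma reach_trans {a b c : V} (h : Reach src tgt a b) (h' : Reach src tgt b c) :
    Reach src tgt a c := by
  obtain ⟨p, hp⟩ := h; obtain ⟨q, hq⟩ := h'
  exact ⟨p ++ q, isPath_append src tgt hp hq⟩

lemma reach_symm {a b : V} (h : Reach src tgt a b) : Reach src tgt b a := by
  obtain ⟨p, hp⟩ := h
  exact ⟨_, isPath_reverse src tgt hp⟩

lemma reach_edge (e : E) : Reach src tgt (src e) (tgt e) := by
  refine ⟨[(e, true)], ?_, rfl⟩
  simp [stepSrc]

/-- the two oriented endpoints of an edge are reachable from each other. -/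
lemma reach_oedge (f : E → Bool) (e : E) :
    Reach src tgt (osrc src tgt f e) (otgt src tgt f e) := by
  cases hf : f e
  · simpa [osrc, otgt, hf] using reach_symm src tgt (reach_edge src tgt e)
  · simpa [osrc, otgt, hf] using reach_edge src tgt e

end StmtAux

/-- Base Adinkra reachability.  Every finite engineerable directed bipartite
graph can be transformed by a finite sequence of vertex lowerings into the base orientation,
in which every edge is directed from its boson endpoint to its fermion endpoint. -/
theorem stmt16 {V E : Type*} [Fintype V] [Fintype E] [DecidableEq V] (src tgt : E → V)
    (boson : V → Prop) (hbip : ∀ e, boson (src e) ↔ ¬ boson (tgt e))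
    (f : E → Bool)
    (heng : ∃ hgt : V → ℤ, IsHeight (osrc src tgt f) (otgt src tgt f) hgt) :
    ∃ g : E → Bool,
      Relation.ReflTransGen (fun f₁ f₂ => ∃ w, Lower src tgt f₁ f₂ w) f g ∧
      (∀ e, boson (osrc src tgt g e)) := by
  classical
  obtain ⟨h0, hh0⟩ := heng
  set ε : V → ℤ := fun v => if boson v then 0 else 1 with hε
  have hε01 : ∀ v, ε v = 0 ∨ ε v = 1 := by
    intro v; by_cases h : boson v <;> simp [hε, h]
  -- ε differs by exactly one across any edge
  have hεedge : ∀ e, ε (src e) + ε (tgt e) = 1 := by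
    intro e
    have := hbip e
    by_cases h : boson (src e)
    · have h2 : ¬ boson (tgt e) := (hbip e).mp h
      simp [hε, h, h2]
    · have h2 : boson (tgt e) := by
        by_contra h2; exact h ((hbip e).mpr h2)
      simp [hε, h, h2]
  set d0 : V → ℤ := fun v => h0 v - ε v with hd0
  -- parity of d0 is constant along reachability
  have hpar_edge : ∀ e : E, (2 : ℤ) ∣ d0 (src e) - d0 (tgt e) := by
    intro e
    have h1 := hh0 e
    have h2 := hεedge e
    rcases hε01 (src e) with hs | hs <;> rcases hε01 (tgt e) with ht | ht <;>
      cases hf : f e <;> simp [osrc, otgt, hf] at h1 <;> simp [hd0, hs, ht] <;> omega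
  have hpar : ∀ a b : V, Reach src tgt a b → (2 : ℤ) ∣ d0 a - d0 b := by
    intro a b ⟨p, hp⟩
    induction p generalizing a with
    | nil => have hab : a = b := hp; subst hab; simp
    | cons s q ih =>
        obtain ⟨h1, h2⟩ := hp
        have hstep : (2 : ℤ) ∣ d0 a - d0 (stepTgt src tgt s) := by
          subst h1
          cases hs : s.2 <;> simp [stepSrc, stepTgt, hs]
          · have := hpar_edge s.1; omega
          · have := hpar_edge s.1; omega
        have := ih _ h2
        omega
  -- per-component minimum of d0
  have hne : ∀ v : V, ((Finset.univ.filter (Reach src tgt v)).image d0).Nonempty := by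
    intro v
    exact ⟨d0 v, Finset.mem_image_of_mem d0 (by simp [StmtAux.reach_refl])⟩
  set m : V → ℤ := fun v => ((Finset.univ.filter (Reach src tgt v)).image d0).min' (hne v)
    with hm
  have hm_le : ∀ v, m v ≤ d0 v := by
    intro v
    exact Finset.min'_le _ _ (Finset.mem_image_of_mem d0 (by simp [StmtAux.reach_refl]))
  have hm_eq : ∀ a b : V, Reach src tgt a b → m a = m b := by
    intro a b hab
    have hset : (Finset.univ.filter (Reach src tgt a)) =
        (Finset.univ.filter (Reach src tgt b)) := by
      ext w
      simp only [Finset.mem_filter, Finset.mem_univ, true_and]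
      constructor
      · exact fun h => StmtAux.reach_trans src tgt (StmtAux.reach_symm src tgt hab) h
      · exact fun h => StmtAux.reach_trans src tgt hab h
    simp [hm, hset]
  have hm_par : ∀ v, (2 : ℤ) ∣ d0 v - m v := by
    intro v
    have hmem := Finset.min'_mem _ (hne v)
    rw [Finset.mem_image] at hmem
    obtain ⟨w, hw, hwm⟩ := hmem
    rw [Finset.mem_filter] at hw
    have hmv : m v = d0 w := by simp only [hm]; exact hwm.symm
    rw [hmv]
    exact hpar v w hw.2
  -- main induction
  have key : ∀ n : ℕ, ∀ (f' : E → Bool) (h' : V → ℤ),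
      IsHeight (osrc src tgt f') (otgt src tgt f') h' →
      (∀ v, m v ≤ h' v - ε v) →
      (∀ v, (2 : ℤ) ∣ h' v - ε v - m v) →
      (∑ v, (h' v - ε v - m v).toNat) ≤ n →
      ∃ g : E → Bool,
        Relation.ReflTransGen (fun f₁ f₂ => ∃ w, Lower src tgt f₁ f₂ w) f' g ∧
        (∀ e, boson (osrc src tgt g e)) := by
    intro n
    induction n with
    | zero =>
        intro f' h' hh' hge hdvd hsum
        -- potential is zero: all d' v = m v, orientation is already base
        have hzero : ∀ v, h' v - ε v = m v := by
          intro v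
          have h1 : (h' v - ε v - m v).toNat = 0 := by
            have := Finset.sum_eq_zero_iff.mp (Nat.le_zero.mp hsum) v (Finset.mem_univ v)
            exact this
          have := hge v
          omega
        refine ⟨f', Relation.ReflTransGen.refl, ?_⟩
        intro e
        by_contra hb
        have h1 := hh' e
        have h2 := hm_eq _ _ (StmtAux.reach_oedge src tgt f' e)
        have h3 := hzero (osrc src tgt f' e)
        have h4 := hzero (otgt src tgt f' e)
        have h5 : ε (osrc src tgt f' e) = 1 := by simp [hε, hb]
        have h6 : ε (otgt src tgt f' e) = 0 ∨ ε (otgt src tgt f' e) = 1 := hε01 _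
        omega
    | succ n ih =>
        intro f' h' hh' hge hdvd hsum
        by_cases hdone : ∀ v : V, h' v - ε v = m v
        · refine ⟨f', Relation.ReflTransGen.refl, ?_⟩
          intro e
          by_contra hb
          have h1 := hh' e
          have h2 := hm_eq _ _ (StmtAux.reach_oedge src tgt f' e)
          have h3 := hdone (osrc src tgt f' e)
          have h4 := hdone (otgt src tgt f' e)
          have h5 : ε (osrc src tgt f' e) = 1 := by simp [hε, hb]
          have h6 : ε (otgt src tgt f' e) = 0 ∨ ε (otgt src tgt f' e) = 1 := hε01 _
          omega
        · push_neg at hdone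
          obtain ⟨v0, hv0⟩ := hdone
          -- the set of "high" vertices
          set S : Finset V := Finset.univ.filter (fun v => m v < h' v - ε v) with hS
          have hSne : S.Nonempty := by
            refine ⟨v0, ?_⟩
            have := hge v0
            simp only [hS, Finset.mem_filter, Finset.mem_univ, true_and]
            omega
          obtain ⟨v, hvS, hvmax⟩ := S.exists_max_image h' hSne
          have hvS' : m v < h' v - ε v := by
            simpa [hS] using hvS
          -- v is a target
          have hnosrc : ∀ e, osrc src tgt f' e ≠ v := by
            intro e he
            have h1 := hh' e
            rw [he] at h1
            set u := otgt src tgt f' e with hu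
            have h2 : m u = m v :=
              (hm_eq _ _ (by rw [← he]; exact StmtAux.reach_oedge src tgt f' e)).symm
            have h3 : ε u ≤ 1 := by rcases hε01 u with h | h <;> omega
            have h4 : 0 ≤ ε v := by rcases hε01 v with h | h <;> omega
            have huS : u ∈ S := by
              simp only [hS, Finset.mem_filter, Finset.mem_univ, true_and]
              omega
            have := hvmax u huS
            omega
          have htar : IsTarget (osrc src tgt f') (otgt src tgt f') v := by
            intro e he
            exact absurd he (hnosrc e)
          -- the lowering
          set g' : E → Bool := fun e =>
            if osrc src tgt f' e = v ∨ otgt src tgt f' e = v then !f' e else f' e with hg'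
          have hlow : Lower src tgt f' g' v := ⟨htar, fun e => rfl⟩
          set h'' : V → ℤ := fun w => if w = v then h' w - 2 else h' w with hh''
          -- endpoints of g'
          have hends : ∀ e, (otgt src tgt f' e = v ∧
              osrc src tgt g' e = otgt src tgt f' e ∧
              otgt src tgt g' e = osrc src tgt f' e) ∨
              (otgt src tgt f' e ≠ v ∧
              osrc src tgt g' e = osrc src tgt f' e ∧
              otgt src tgt g' e = otgt src tgt f' e) := by
            intro e
            by_cases hc : otgt src tgt f' e = v
            · left
              have hge' : g' e = !f' e := by
                simp [hg', hc]
              refine ⟨hc, ?_, ?_⟩ <;> cases hf : f' e <;>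
                simp [osrc, otgt, hge', hf]
            · right
              have hge' : g' e = f' e := by
                simp [hg', hc, hnosrc e]
              refine ⟨hc, ?_, ?_⟩ <;> simp [osrc, otgt, hge']
          have hh'new : IsHeight (osrc src tgt g') (otgt src tgt g') h'' := by
            intro e
            rcases hends e with ⟨hc, hs, ht⟩ | ⟨hc, hs, ht⟩
            · rw [hs, ht, hc]
              have h1 := hh' e
              rw [hc] at h1
              have h2 := hnosrc e
              simp only [hh'', if_neg h2, if_pos rfl]
              omega
            · rw [hs, ht]
              have h1 := hh' e
              have h2 := hnosrc e
              simp only [hh'', if_neg h2, if_neg hc]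
              exact h1
          -- invariants for h''
          have hge'' : ∀ w, m w ≤ h'' w - ε w := by
            intro w
            by_cases hw : w = v
            · subst hw
              have := hdvd w
              simp only [hh'', if_pos rfl]
              omega
            · simp only [hh'', if_neg hw]
              exact hge w
          have hdvd'' : ∀ w, (2 : ℤ) ∣ h'' w - ε w - m w := by
            intro w
            by_cases hw : w = v
            · subst hw
              have := hdvd w
              simp only [hh'', if_pos rfl]
              omega
            · simp only [hh'', if_neg hw]
              exact hdvd w
          have hsum'' : (∑ w, (h'' w - ε w - m w).toNat) ≤ n := by
            have hlt : (∑ w, (h'' w - ε w - m w).toNat) <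
                (∑ w, (h' w - ε w - m w).toNat) := by
              refine Finset.sum_lt_sum (fun w _ => ?_) ⟨v, Finset.mem_univ v, ?_⟩
              · by_cases hw : w = v
                · subst hw
                  simp only [hh'', if_pos rfl]
                  omega
                · simp only [hh'', if_neg hw]
                  exact le_rfl
              · have := hdvd v
                simp only [hh'', if_pos rfl]
                omega
            omega
          obtain ⟨g, hg1, hg2⟩ := ih g' h'' hh'new hge'' hdvd'' hsum''
          exact ⟨g, Relation.ReflTransGen.head ⟨v, hlow⟩ hg1, hg2⟩
  exact key _ f h0 hh0 (fun v => hm_le v) (fun v => hm_par v) le_rfl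
end

section
/- (Connectivity of the family) Any two engineerable orientations of the same finite bipartite graph can be related by a finite sequence of vertex raisings and vertex lowerings, i.e., the relation generated by single vertex raisings/lowerings connects all engineerable orientations of a given topology. -/
def stmt17FlipAt {V E : Type*} [DecidableEq V] (src tgt : E → V) (f : E → Bool) (v : V) :
    E → Bool :=
  fun e => if osrc src tgt f e = v ∨ otgt src tgt f e = v then !f e else f e

lemma stmt17_flip_lower {V E : Type*} [DecidableEq V] (src tgt : E → V) (f : E → Bool) (v : V)
    (htar : IsTarget (osrc src tgt f) (otgt src tgt f) v) :
    Lower src tgt f (stmt17FlipAt src tgt f v) v :=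
  ⟨htar, fun _ => rfl⟩

lemma stmt17_oswap {V E : Type*} (src tgt : E → V) (f₁ f₂ : E → Bool) (e : E)
    (hb : f₂ e = !f₁ e) :
    osrc src tgt f₂ e = otgt src tgt f₁ e ∧ otgt src tgt f₂ e = osrc src tgt f₁ e := by
  simp only [osrc, otgt, hb]; cases f₁ e <;> simp

lemma stmt17_oeq {V E : Type*} (src tgt : E → V) (f₁ f₂ : E → Bool) (e : E)
    (hb : f₂ e = f₁ e) :
    osrc src tgt f₂ e = osrc src tgt f₁ e ∧ otgt src tgt f₂ e = otgt src tgt f₁ e := by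
  unfold osrc otgt; rw [hb]; exact ⟨rfl, rfl⟩

lemma stmt17_bne {a b : Bool} (h : a ≠ b) : b = !a := by
  cases a <;> cases b <;> simp_all

lemma stmt17_flip_height {V E : Type*} [DecidableEq V] (src tgt : E → V)
    (f : E → Bool) (hgt : V → ℤ)
    (hh : IsHeight (osrc src tgt f) (otgt src tgt f) hgt) (v : V)
    (htar : IsTarget (osrc src tgt f) (otgt src tgt f) v) :
    IsHeight (osrc src tgt (stmt17FlipAt src tgt f v)) (otgt src tgt (stmt17FlipAt src tgt f v))
      (fun u => if u = v then hgt u - 2 else hgt u) := by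
  intro e
  have he := hh e
  by_cases hc : osrc src tgt f e = v ∨ otgt src tgt f e = v
  · have hne : osrc src tgt f e ≠ otgt src tgt f e := by
      intro h; rw [h] at he; omega
    have h2 : otgt src tgt f e = v := by
      rcases hc with h | h
      · exact htar e h
      · exact h
    have h3 : osrc src tgt f e ≠ v := by
      intro h4; exact hne (h4.trans h2.symm)
    have hg : stmt17FlipAt src tgt f v e = !f e := by simp [stmt17FlipAt, hc]
    have hs : osrc src tgt (stmt17FlipAt src tgt f v) e = otgt src tgt f e := by
      simp only [osrc, otgt, hg]; cases f e <;> simp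
    have ht : otgt src tgt (stmt17FlipAt src tgt f v) e = osrc src tgt f e := by
      simp only [osrc, otgt, hg]; cases f e <;> simp
    rw [h2] at he
    simp only [hs, ht, h2, if_neg h3, if_pos rfl, if_true]
    omega
  · have hg : stmt17FlipAt src tgt f v e = f e := by simp only [stmt17FlipAt, if_neg hc]
    push_neg at hc
    have hs : osrc src tgt (stmt17FlipAt src tgt f v) e = osrc src tgt f e := by
      simp only [osrc, hg]
    have ht : otgt src tgt (stmt17FlipAt src tgt f v) e = otgt src tgt f e := by
      simp only [otgt, hg]
    simp only [hs, ht, if_neg hc.1, if_neg hc.2]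
    exact he

lemma stmt17_sum_lt {V : Type*} [Fintype V] [DecidableEq V] (G G' : V → ℕ) (v : V)
    (hoff : ∀ u, u ≠ v → G' u = G u) (hv : G' v < G v) : ∑ u, G' u < ∑ u, G u := by
  rw [← Finset.sum_erase_add Finset.univ G (Finset.mem_univ v),
      ← Finset.sum_erase_add Finset.univ G' (Finset.mem_univ v)]
  have he : ∑ u ∈ Finset.univ.erase v, G' u = ∑ u ∈ Finset.univ.erase v, G u :=
    Finset.sum_congr rfl fun u hu => hoff u (Finset.ne_of_mem_erase hu)
  omega

lemma stmt17_key {V E : Type*} [Fintype V] [Fintype E] [DecidableEq V] (src tgt : E → V) :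
    ∀ (N : ℕ) (f₁ f₂ : E → Bool) (h₁ h₂ : V → ℤ),
      IsHeight (osrc src tgt f₁) (otgt src tgt f₁) h₁ →
      IsHeight (osrc src tgt f₂) (otgt src tgt f₂) h₂ →
      (∑ u : V, (2 * (h₁ u - h₂ u).natAbs + if 1 ≤ h₁ u - h₂ u then 1 else 0)) ≤ N →
      Relation.ReflTransGen
        (fun g₁ g₂ => (∃ w, Lower src tgt g₁ g₂ w) ∨ (∃ w, Lower src tgt g₂ g₁ w)) f₁ f₂ := by
  intro N
  induction N using Nat.strong_induction_on with
  | _ N ih =>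
  intro f₁ f₂ h₁ h₂ hh₁ hh₂ hle
  by_cases hfe : f₁ = f₂
  · subst hfe; exact Relation.ReflTransGen.refl
  · obtain ⟨e₀, he₀⟩ : ∃ e, f₁ e ≠ f₂ e := by
      by_contra hc; push_neg at hc; exact hfe (funext hc)
    have hVne : Nonempty V := ⟨src e₀⟩
    obtain ⟨hsw₀, htw₀⟩ := stmt17_oswap src tgt f₁ f₂ e₀ (stmt17_bne he₀)
    have t₁ := hh₁ e₀
    have t₂ := hh₂ e₀
    rw [hsw₀, htw₀] at t₂
    set M := Finset.univ.sup' Finset.univ_nonempty (fun u => h₁ u - h₂ u) with hMdef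
    set m := Finset.univ.inf' Finset.univ_nonempty (fun u => h₁ u - h₂ u) with hmdef
    have hMle : ∀ u, h₁ u - h₂ u ≤ M := fun u =>
      Finset.le_sup' (fun u => h₁ u - h₂ u) (Finset.mem_univ u)
    have hmle : ∀ u, m ≤ h₁ u - h₂ u := fun u =>
      Finset.inf'_le (fun u => h₁ u - h₂ u) (Finset.mem_univ u)
    have hMm : m + 2 ≤ M := by
      have a1 := hMle (otgt src tgt f₁ e₀)
      have a2 := hmle (osrc src tgt f₁ e₀)
      omega
    by_cases hM1 : 1 ≤ M
    · -- lower f₁ at a vertex maximizing h₁ among those with h₁ - h₂ = M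
      obtain ⟨w, -, hw⟩ := Finset.exists_mem_eq_sup' Finset.univ_nonempty
        (fun u => h₁ u - h₂ u)
      obtain ⟨v, hvS, hvmax⟩ := Finset.exists_max_image
        (Finset.univ.filter fun u => h₁ u - h₂ u = M) h₁
        ⟨w, Finset.mem_filter.2 ⟨Finset.mem_univ w, hw.symm⟩⟩
      have hv : h₁ v - h₂ v = M := (Finset.mem_filter.1 hvS).2
      have htar : IsTarget (osrc src tgt f₁) (otgt src tgt f₁) v := by
        intro e hesrc
        exfalso
        have u₁ := hh₁ e
        rw [hesrc] at u₁
        by_cases hfe2 : f₂ e = f₁ e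
        · obtain ⟨hsw, htw⟩ := stmt17_oeq src tgt f₁ f₂ e hfe2
          have u₂ := hh₂ e
          rw [hsw, htw, hesrc] at u₂
          have hu : h₁ (otgt src tgt f₁ e) - h₂ (otgt src tgt f₁ e) = M := by omega
          have := hvmax (otgt src tgt f₁ e)
            (Finset.mem_filter.2 ⟨Finset.mem_univ _, hu⟩)
          omega
        · obtain ⟨hsw, htw⟩ := stmt17_oswap src tgt f₁ f₂ e (stmt17_bne (Ne.symm hfe2))
          have u₂ := hh₂ e
          rw [hsw, htw, hesrc] at u₂
          have := hMle (otgt src tgt f₁ e)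
          omega
      have hlow := stmt17_flip_lower src tgt f₁ v htar
      have hh₁' := stmt17_flip_height src tgt f₁ h₁ hh₁ v htar
      set h₁' : V → ℤ := fun u => if u = v then h₁ u - 2 else h₁ u with h₁'def
      have hlt : (∑ u : V, (2 * (h₁' u - h₂ u).natAbs + if 1 ≤ h₁' u - h₂ u then 1 else 0))
          < ∑ u : V, (2 * (h₁ u - h₂ u).natAbs + if 1 ≤ h₁ u - h₂ u then 1 else 0) := by
        apply stmt17_sum_lt _ _ v
        · intro u hu
          simp only [h₁'def, if_neg hu]
        · have hvv : h₁' v = h₁ v - 2 := by simp [h₁'def]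
          rw [hvv]
          split_ifs <;> omega
      have step := ih _ (lt_of_lt_of_le hlt hle) (stmt17FlipAt src tgt f₁ v) f₂ h₁' h₂
        hh₁' hh₂ le_rfl
      exact Relation.ReflTransGen.head (Or.inl ⟨v, hlow⟩) step
    · -- lower f₂ at a vertex maximizing h₂ among those with h₁ - h₂ = m
      have hm2 : m ≤ -2 := by omega
      obtain ⟨w, -, hw⟩ := Finset.exists_mem_eq_inf' Finset.univ_nonempty
        (fun u => h₁ u - h₂ u)
      obtain ⟨v, hvS, hvmax⟩ := Finset.exists_max_image
        (Finset.univ.filter fun u => h₁ u - h₂ u = m) h₂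
        ⟨w, Finset.mem_filter.2 ⟨Finset.mem_univ w, hw.symm⟩⟩
      have hv : h₁ v - h₂ v = m := (Finset.mem_filter.1 hvS).2
      have htar : IsTarget (osrc src tgt f₂) (otgt src tgt f₂) v := by
        intro e hesrc
        exfalso
        have u₂ := hh₂ e
        rw [hesrc] at u₂
        by_cases hfe2 : f₁ e = f₂ e
        · obtain ⟨hsw, htw⟩ := stmt17_oeq src tgt f₂ f₁ e hfe2
          have u₁ := hh₁ e
          rw [hsw, htw, hesrc] at u₁
          have hu : h₁ (otgt src tgt f₂ e) - h₂ (otgt src tgt f₂ e) = m := by omega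
          have := hvmax (otgt src tgt f₂ e)
            (Finset.mem_filter.2 ⟨Finset.mem_univ _, hu⟩)
          omega
        · obtain ⟨hsw, htw⟩ := stmt17_oswap src tgt f₂ f₁ e (stmt17_bne (Ne.symm hfe2))
          have u₁ := hh₁ e
          rw [hsw, htw, hesrc] at u₁
          have := hmle (otgt src tgt f₂ e)
          omega
      have hlow := stmt17_flip_lower src tgt f₂ v htar
      have hh₂' := stmt17_flip_height src tgt f₂ h₂ hh₂ v htar
      set h₂' : V → ℤ := fun u => if u = v then h₂ u - 2 else h₂ u with h₂'def
      have hlt : (∑ u : V, (2 * (h₁ u - h₂' u).natAbs + if 1 ≤ h₁ u - h₂' u then 1 else 0))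
          < ∑ u : V, (2 * (h₁ u - h₂ u).natAbs + if 1 ≤ h₁ u - h₂ u then 1 else 0) := by
        apply stmt17_sum_lt _ _ v
        · intro u hu
          simp only [h₂'def, if_neg hu]
        · have hvv : h₂' v = h₂ v - 2 := by simp [h₂'def]
          rw [hvv]
          split_ifs <;> omega
      have step := ih _ (lt_of_lt_of_le hlt hle) f₁ (stmt17FlipAt src tgt f₂ v) h₁ h₂'
        hh₁ hh₂' le_rfl
      exact Relation.ReflTransGen.tail step (Or.inr ⟨v, hlow⟩)

/-- Connectivity of the family.  Any two engineerable orientations of the same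
finite bipartite graph are related by a finite sequence of vertex raisings and lowerings. -/
theorem stmt17 {V E : Type*} [Fintype V] [Fintype E] [DecidableEq V] (src tgt : E → V)
    (boson : V → Prop) (hbip : ∀ e, boson (src e) ↔ ¬ boson (tgt e))
    (f₁ f₂ : E → Bool)
    (heng₁ : ∃ hgt : V → ℤ, IsHeight (osrc src tgt f₁) (otgt src tgt f₁) hgt)
    (heng₂ : ∃ hgt : V → ℤ, IsHeight (osrc src tgt f₂) (otgt src tgt f₂) hgt) :
    Relation.ReflTransGen
      (fun g₁ g₂ => (∃ w, Lower src tgt g₁ g₂ w) ∨ (∃ w, Lower src tgt g₂ g₁ w))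
      f₁ f₂ := by
  classical
  obtain ⟨h₁, hh₁⟩ := heng₁
  obtain ⟨h₂, hh₂⟩ := heng₂
  exact stmt17_key src tgt _ f₁ f₂ h₁ h₂ hh₁ hh₂ le_rfl
end

section
/- (Sources of the hanging-garden height function) Let G be a finite connected bipartite graph, s_1,...,s_M distinct vertices, and integers h_1,...,h_M of parity matching the bipartition and satisfying dist(s_α, s_β) > |h_α − h_β| for α ≠ β. Define hgt(v) := min over α of (dist(s_α, v) + h_α). Then hgt(s_α) = h_α for each α, adjacent vertices have hgt differing by exactly 1, and the set of sources of the induced orientation (edges directed from smaller to larger hgt) is exactly {s_1,...,s_M}. -/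
lemma walk_parity_aux19 {V : Type*} {G : SimpleGraph V} (boson : V → Bool)
    (hbip : ∀ v w : V, G.Adj v w → boson v ≠ boson w) :
    ∀ {u v : V} (p : G.Walk u v), (boson u = boson v ↔ Even p.length) := by
  intro u v p
  induction p with
  | nil => simp
  | @cons a b c ha p ih =>
    have hab := hbip _ _ ha
    rw [SimpleGraph.Walk.length_cons, Nat.even_add_one, ← ih]
    cases hu : boson a <;> cases hv : boson b <;> cases hw : boson c <;> simp_all

/-- Sources of the hanging-garden height function.  For distinct prescribed
sources `S` with heights `h` of the right parity satisfying `dist s₁ s₂ > |h s₁ − h s₂|`,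
the function `hgt v = min_{s∈S} (dist s v + h s)` extends `h`, adjacent vertices have `hgt`
differing by exactly one, and the sources of the induced orientation (edges directed from
lower to higher `hgt`) are exactly the elements of `S`. -/
theorem stmt19 {V : Type*} [Fintype V] [DecidableEq V]
    (G : SimpleGraph V) (hconn : G.Connected)
    (boson : V → Bool) (hbip : ∀ v w : V, G.Adj v w → boson v ≠ boson w)
    (S : Finset V) (hS : S.Nonempty) (h : V → ℤ)
    (hpar : ∀ s ∈ S, (boson s = true → Even (h s)) ∧ (boson s = false → Odd (h s)))
    (hdist : ∀ s₁ ∈ S, ∀ s₂ ∈ S, s₁ ≠ s₂ → |h s₁ - h s₂| < (G.dist s₁ s₂ : ℤ))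
    (hgt : V → ℤ)
    (hdef : ∀ v, hgt v = S.inf' hS (fun s => (G.dist s v : ℤ) + h s)) :
    (∀ s ∈ S, hgt s = h s) ∧
    (∀ v w : V, G.Adj v w → hgt v = hgt w + 1 ∨ hgt w = hgt v + 1) ∧
    (∀ v : V, (∀ w : V, G.Adj v w → hgt v < hgt w) ↔ v ∈ S) := by
  -- parity of distance vs colours
  have parity_dist : ∀ u v : V, (boson u = boson v ↔ Even (G.dist u v)) := by
    intro u v
    obtain ⟨p, hp⟩ := hconn.exists_walk_length_eq_dist u v
    rw [← hp]
    exact walk_parity_aux19 boson hbip p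
  -- parity of hgt
  have hgt_par : ∀ v : V, (Even (hgt v) ↔ boson v = true) := by
    intro v
    obtain ⟨s, hsS, hs⟩ := Finset.exists_mem_eq_inf' hS (fun s => (G.dist s v : ℤ) + h s)
    rw [hdef v, hs, Int.even_add, Int.even_coe_nat]
    have hd := parity_dist s v
    have hEh : Even (h s) ↔ boson s = true := by
      cases hbs : boson s
      · simpa [Int.not_even_iff_odd] using (hpar s hsS).2 hbs
      · simp [(hpar s hsS).1 hbs]
    rw [← hd, hEh]
    cases hbs : boson s <;> cases hbv : boson v <;> simp [hbs, hbv]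
  -- adjacent vertices have different hgt
  have hgt_ne : ∀ v w : V, G.Adj v w → hgt v ≠ hgt w := by
    intro v w hvw he
    have h1 := hgt_par v
    have h2 := hgt_par w
    have h3 := hbip v w hvw
    rw [he] at h1
    cases hv' : boson v <;> cases hw' : boson w <;> simp_all
  -- one-step bound
  have step : ∀ v w : V, G.Adj v w → hgt v ≤ hgt w + 1 := by
    intro v w hvw
    obtain ⟨s, hsS, hs⟩ := Finset.exists_mem_eq_inf' hS (fun s => (G.dist s w : ℤ) + h s)
    rw [hdef v, hdef w, hs]
    refine le_trans (Finset.inf'_le _ hsS) ?_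
    have htri : G.dist s v ≤ G.dist s w + G.dist w v := hconn.dist_triangle
    have h1 : G.dist w v = 1 := by rw [SimpleGraph.dist_eq_one_iff_adj]; exact hvw.symm

    omega
  -- part 1
  have part1 : ∀ s ∈ S, hgt s = h s := by
    intro s hsS
    rw [hdef s]
    apply le_antisymm
    · refine le_trans (Finset.inf'_le _ hsS) ?_
      simp [SimpleGraph.dist_self]
    · apply Finset.le_inf'
      intro t htS
      by_cases hts : t = s
      · subst hts; simp [SimpleGraph.dist_self]
      · have h1 := hdist t htS s hsS hts
        have h2 : h s - h t ≤ |h t - h s| := by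
          rw [abs_sub_comm]; exact le_abs_self _
        linarith
  refine ⟨part1, ?_, ?_⟩
  · -- part 2
    intro v w hvw
    have h1 := step v w hvw
    have h2 := step w v hvw.symm
    have h3 := hgt_ne v w hvw
    omega
  · -- part 3
    intro v
    constructor
    · intro hall
      by_contra hvS
      obtain ⟨s, hsS, hs⟩ := Finset.exists_mem_eq_inf' hS (fun s => (G.dist s v : ℤ) + h s)
      have hsv : v ≠ s := fun he => hvS (he ▸ hsS)
      obtain ⟨p, hp⟩ := hconn.exists_walk_length_eq_dist s v
      obtain ⟨w, hadj, q, hq⟩ := SimpleGraph.Walk.exists_eq_cons_of_ne hsv p.reverse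
      have hlen : q.length + 1 = G.dist s v := by
        have := congrArg SimpleGraph.Walk.length hq
        simp only [SimpleGraph.Walk.length_reverse, SimpleGraph.Walk.length_cons] at this
        omega
      have hdw : G.dist s w ≤ q.length := by
        have := SimpleGraph.dist_le q.reverse
        simpa using this
      have hle : hgt w ≤ hgt v - 1 := by
        rw [hdef w]
        refine le_trans (Finset.inf'_le _ hsS) ?_
        have h4 : (G.dist s w : ℤ) ≤ (G.dist s v : ℤ) - 1 := by omega
        have h5 : hgt v = (G.dist s v : ℤ) + h s := by rw [hdef v, hs]
        linarith
      have := hall w hadj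
      omega
    · intro hvS w hvw
      have hge : h v ≤ hgt w := by
        rw [hdef w]
        apply Finset.le_inf'
        intro t htS
        by_cases htv : t = v
        · subst htv
          have h1 : G.dist t w = 1 := by rw [SimpleGraph.dist_eq_one_iff_adj]; exact hvw
          rw [h1]; push_cast; omega
        · have h1 := hdist t htS v hvS htv
          have htri : G.dist t v ≤ G.dist t w + G.dist w v := hconn.dist_triangle
          have h2 : G.dist w v = 1 := by rw [SimpleGraph.dist_eq_one_iff_adj]; exact hvw.symm
          have h3 : h v - h t ≤ |h t - h v| := by
            rw [abs_sub_comm]; exact le_abs_self _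
          have h4 : (G.dist t v : ℤ) ≤ (G.dist t w : ℤ) + 1 := by omega
          linarith
      have hne := hgt_ne v w hvw
      have := part1 v hvS
      omega
end
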